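/- arXiv:2210.09209 — 4 statements merged into one kernel-verified Lean document; each statement's English description precedes it below -/
import Mathlib

section
/- Let k1 and k2 be positive integers and let n = gcd(k1, k2). Then there exists a matrix X in SL(2, ℤ) all of whose entries are non-negative such that X applied to the column vector (n, n) equals the column vector (k1, k2). -/
private def L : Matrix.SpecialLinearGroup (Fin 2) ℤ :=
  ⟨!![1, 0; 1, 1], by norm_num [Matrix.det_fin_two_of]⟩

private def U : Matrix.SpecialLinearGroup (Fin 2) ℤ :=
  ⟨!![1, 1; 0, 1], by norm_num [Matrix.det_fin_two_of]⟩

private lemma sl2_aux : ∀ N (k1 k2 : ℕ), k1 + k2 ≤ N → 0 < k1 → 0 < k2 →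
    ∃ X : Matrix.SpecialLinearGroup (Fin 2) ℤ,
      (∀ i j, 0 ≤ (X : Matrix (Fin 2) (Fin 2) ℤ) i j) ∧
      (X : Matrix (Fin 2) (Fin 2) ℤ).mulVec ![(Nat.gcd k1 k2 : ℤ), (Nat.gcd k1 k2 : ℤ)]
        = ![(k1 : ℤ), (k2 : ℤ)] := by
  intro N
  induction N with
  | zero => intro k1 k2 h h1 h2; omega
  | succ N ih =>
    intro k1 k2 hle h1 h2
    rcases lt_trichotomy k1 k2 with h | h | h
    · obtain ⟨X, hpos, hmul⟩ := ih k1 (k2 - k1) (by omega) h1 (by omega)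
      rw [Nat.gcd_sub_self_right h.le] at hmul
      refine ⟨L * X, ?_, ?_⟩
      · intro i j
        rw [Matrix.SpecialLinearGroup.coe_mul, Matrix.mul_apply]
        refine Finset.sum_nonneg fun l _ => mul_nonneg ?_ (hpos l j)
        fin_cases i <;> fin_cases l <;> norm_num [L, U]
      · rw [Matrix.SpecialLinearGroup.coe_mul, ← Matrix.mulVec_mulVec, hmul]
        funext i
        fin_cases i <;>
          simp [L, U, Matrix.mulVec, dotProduct, Fin.sum_univ_two] <;>
          push_cast [Nat.cast_sub h.le] <;> ring
    · subst h
      refine ⟨1, ?_, ?_⟩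
      · intro i j
        simp only [Matrix.SpecialLinearGroup.coe_one]
        fin_cases i <;> fin_cases j <;> norm_num [Matrix.one_apply]
      · rw [Matrix.SpecialLinearGroup.coe_one, Matrix.one_mulVec, Nat.gcd_self]
    · obtain ⟨X, hpos, hmul⟩ := ih (k1 - k2) k2 (by omega) (by omega) h2
      rw [Nat.gcd_sub_self_left h.le] at hmul
      refine ⟨U * X, ?_, ?_⟩
      · intro i j
        rw [Matrix.SpecialLinearGroup.coe_mul, Matrix.mul_apply]
        refine Finset.sum_nonneg fun l _ => mul_nonneg ?_ (hpos l j)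
        fin_cases i <;> fin_cases l <;> norm_num [L, U]
      · rw [Matrix.SpecialLinearGroup.coe_mul, ← Matrix.mulVec_mulVec, hmul]
        funext i
        fin_cases i <;>
          simp [L, U, Matrix.mulVec, dotProduct, Fin.sum_univ_two] <;>
          push_cast [Nat.cast_sub h.le] <;> ring

/-- For positive integers `k1, k2` with `n = gcd k1 k2`, there is a matrix
`X ∈ SL(2, ℤ)` with non-negative entries such that `X • (n, n) = (k1, k2)`. -/
theorem exists_sl2_nonneg_mulVec_gcd (k1 k2 : ℕ) (hk1 : 0 < k1) (hk2 : 0 < k2) :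
    ∃ X : Matrix.SpecialLinearGroup (Fin 2) ℤ,
      (∀ i j, 0 ≤ (X : Matrix (Fin 2) (Fin 2) ℤ) i j) ∧
      (X : Matrix (Fin 2) (Fin 2) ℤ).mulVec ![(Nat.gcd k1 k2 : ℤ), (Nat.gcd k1 k2 : ℤ)]
        = ![(k1 : ℤ), (k2 : ℤ)] := by
  exact sl2_aux (k1 + k2) k1 k2 le_rfl hk1 hk2
end

section
/- Let k1 and k2 be positive integers and let n = gcd(k1, k2). If X1 and X2 are matrices in SL(2, ℤ), both with all entries non-negative, and both satisfy Xi applied to the column vector (n, n) equals the column vector (k1, k2), then X1 = X2. -/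
private lemma sl2_aux_s1 (a1 b1 c1 d1 a2 b2 c2 d2 : ℤ)
    (ha1' : 0 ≤ a1) (hb1' : 0 ≤ b1) (hc1' : 0 ≤ c1) (hd1' : 0 ≤ d1)
    (ha2' : 0 ≤ a2) (hb2' : 0 ≤ b2) (hc2' : 0 ≤ c2) (hd2' : 0 ≤ d2)
    (det1 : a1 * d1 - b1 * c1 = 1) (det2 : a2 * d2 - b2 * c2 = 1)
    (hsum1 : a2 + b2 = a1 + b1) (hsum2 : c2 + d2 = c1 + d1)
    (hspos : 0 < a1 + b1) (htpos : 0 < c1 + d1)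
    (hcop : IsCoprime (a1 + b1) (c1 + d1)) :
    a1 = a2 ∧ b1 = b2 ∧ c1 = c2 ∧ d1 = d2 := by
  set s := a1 + b1 with hs
  set t := c1 + d1 with ht
  set e := a2 - a1 with he
  set f := c2 - c1 with hf
  have hb2e : b2 = b1 - e := by rw [he]; linarith [hsum1]
  have hd2f : d2 = d1 - f := by rw [hf]; linarith [hsum2]
  have hA2 : a2 = a1 + e := by rw [he]; ring
  have hC2 : c2 = c1 + f := by rw [hf]; ring
  have key : e * t = f * s := by
    rw [hA2, hb2e, hC2, hd2f] at det2
    rw [ht, hs]; linear_combination det2 - det1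
  have hsdvd : s ∣ e := by
    exact hcop.dvd_of_dvd_mul_right ⟨f, by linarith [key]⟩
  have htdvd : t ∣ f := by
    exact hcop.symm.dvd_of_dvd_mul_right ⟨e, by linarith [key]⟩
  obtain ⟨m, hm⟩ := hsdvd
  obtain ⟨m', hm'⟩ := htdvd
  have hmm : m = m' := by
    have h : s * t * (m - m') = 0 := by
      have hk := key; rw [hm, hm'] at hk; linear_combination hk
    rcases mul_eq_zero.mp h with h' | h'
    · exact absurd h' (mul_ne_zero (ne_of_gt hspos) (ne_of_gt htpos))
    · linarith
  subst hmm
  have hmzero : m = 0 := by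
    rcases lt_trichotomy m 0 with hm0 | hm0 | hm0
    · exfalso
      have hB : b1 = b2 + s * m := by rw [hb2e, hm]; ring
      have hD : d1 = d2 + t * m := by rw [hd2f, hm']; ring
      have hS : s = a2 + b2 := by rw [hs]; linarith [hsum1]
      have hT : t = c2 + d2 := by rw [ht]; linarith [hsum2]
      have ha2z : a2 = 0 := by
        have hle : a2 ≤ 0 := by
          nlinarith [hb1', hB, hS, mul_nonneg ha2' (by linarith : (0:ℤ) ≤ -m - 1),
            mul_nonneg hb2' (by linarith : (0:ℤ) ≤ -m - 1)]
        linarith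
      have hc2z : c2 = 0 := by
        have hle : c2 ≤ 0 := by
          nlinarith [hd1', hD, hT, mul_nonneg hc2' (by linarith : (0:ℤ) ≤ -m - 1),
            mul_nonneg hd2' (by linarith : (0:ℤ) ≤ -m - 1)]
        linarith
      rw [ha2z, hc2z] at det2; simp at det2
    · exact hm0
    · exfalso
      have hB : b2 = b1 - s * m := by rw [hb2e, hm]
      have hD : d2 = d1 - t * m := by rw [hd2f, hm']
      have ha1z : a1 = 0 := by
        have hle : a1 ≤ 0 := by
          nlinarith [hb2', hB, hs, mul_nonneg ha1' (by linarith : (0:ℤ) ≤ m - 1),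
            mul_nonneg hb1' (by linarith : (0:ℤ) ≤ m - 1)]
        linarith
      have hc1z : c1 = 0 := by
        have hle : c1 ≤ 0 := by
          nlinarith [hd2', hD, ht, mul_nonneg hc1' (by linarith : (0:ℤ) ≤ m - 1),
            mul_nonneg hd1' (by linarith : (0:ℤ) ≤ m - 1)]
        linarith
      rw [ha1z, hc1z] at det1; simp at det1
  subst hmzero
  have hE : e = 0 := by simpa using hm
  have hF : f = 0 := by simpa using hm'
  refine ⟨by rw [hA2, hE]; ring, by rw [hb2e, hE]; ring,
    by rw [hC2, hF]; ring, by rw [hd2f, hF]; ring⟩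

/-- Uniqueness: if `X1, X2 ∈ SL(2, ℤ)` both have non-negative entries and both
send the vector `(n, n)` (with `n = gcd k1 k2`) to `(k1, k2)`, then `X1 = X2`. -/
theorem sl2_nonneg_mulVec_gcd_unique (k1 k2 : ℕ) (hk1 : 0 < k1) (hk2 : 0 < k2)
    (X1 X2 : Matrix.SpecialLinearGroup (Fin 2) ℤ)
    (h1nonneg : ∀ i j, 0 ≤ (X1 : Matrix (Fin 2) (Fin 2) ℤ) i j)
    (h2nonneg : ∀ i j, 0 ≤ (X2 : Matrix (Fin 2) (Fin 2) ℤ) i j)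
    (h1 : (X1 : Matrix (Fin 2) (Fin 2) ℤ).mulVec
        ![(Nat.gcd k1 k2 : ℤ), (Nat.gcd k1 k2 : ℤ)] = ![(k1 : ℤ), (k2 : ℤ)])
    (h2 : (X2 : Matrix (Fin 2) (Fin 2) ℤ).mulVec
        ![(Nat.gcd k1 k2 : ℤ), (Nat.gcd k1 k2 : ℤ)] = ![(k1 : ℤ), (k2 : ℤ)]) :
    X1 = X2 := by
  have hnpos : 0 < (Nat.gcd k1 k2 : ℤ) := by
    exact_mod_cast Nat.gcd_pos_of_pos_left k2 hk1
  have e11 := congrFun h1 0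
  have e12 := congrFun h1 1
  have e21 := congrFun h2 0
  have e22 := congrFun h2 1
  simp only [Matrix.mulVec, dotProduct, Fin.sum_univ_two, Matrix.cons_val_zero,
    Matrix.cons_val_one, Matrix.head_cons] at e11 e12 e21 e22
  have det1 : (X1 : Matrix (Fin 2) (Fin 2) ℤ) 0 0 * (X1 : Matrix (Fin 2) (Fin 2) ℤ) 1 1 -
      (X1 : Matrix (Fin 2) (Fin 2) ℤ) 0 1 * (X1 : Matrix (Fin 2) (Fin 2) ℤ) 1 0 = 1 := by
    have := X1.2; rw [Matrix.det_fin_two] at this; exact this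
  have det2 : (X2 : Matrix (Fin 2) (Fin 2) ℤ) 0 0 * (X2 : Matrix (Fin 2) (Fin 2) ℤ) 1 1 -
      (X2 : Matrix (Fin 2) (Fin 2) ℤ) 0 1 * (X2 : Matrix (Fin 2) (Fin 2) ℤ) 1 0 = 1 := by
    have := X2.2; rw [Matrix.det_fin_two] at this; exact this
  obtain ⟨a1, ha1⟩ : ∃ x, (X1 : Matrix (Fin 2) (Fin 2) ℤ) 0 0 = x := ⟨_, rfl⟩
  obtain ⟨b1, hb1⟩ : ∃ x, (X1 : Matrix (Fin 2) (Fin 2) ℤ) 0 1 = x := ⟨_, rfl⟩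
  obtain ⟨c1, hc1⟩ : ∃ x, (X1 : Matrix (Fin 2) (Fin 2) ℤ) 1 0 = x := ⟨_, rfl⟩
  obtain ⟨d1, hd1⟩ : ∃ x, (X1 : Matrix (Fin 2) (Fin 2) ℤ) 1 1 = x := ⟨_, rfl⟩
  obtain ⟨a2, ha2⟩ : ∃ x, (X2 : Matrix (Fin 2) (Fin 2) ℤ) 0 0 = x := ⟨_, rfl⟩
  obtain ⟨b2, hb2⟩ : ∃ x, (X2 : Matrix (Fin 2) (Fin 2) ℤ) 0 1 = x := ⟨_, rfl⟩
  obtain ⟨c2, hc2⟩ : ∃ x, (X2 : Matrix (Fin 2) (Fin 2) ℤ) 1 0 = x := ⟨_, rfl⟩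
  obtain ⟨d2, hd2⟩ : ∃ x, (X2 : Matrix (Fin 2) (Fin 2) ℤ) 1 1 = x := ⟨_, rfl⟩
  have ha1' := h1nonneg 0 0; have hb1' := h1nonneg 0 1
  have hc1' := h1nonneg 1 0; have hd1' := h1nonneg 1 1
  have ha2' := h2nonneg 0 0; have hb2' := h2nonneg 0 1
  have hc2' := h2nonneg 1 0; have hd2' := h2nonneg 1 1
  simp only [ha1, hb1, hc1, hd1, ha2, hb2, hc2, hd2] at e11 e12 e21 e22 det1 det2 ha1' hb1' hc1' hd1' ha2' hb2' hc2' hd2'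
  set n : ℤ := (Nat.gcd k1 k2 : ℤ) with hn
  have hns : n * (a1 + b1) = (k1 : ℤ) := by linear_combination e11
  have hnt : n * (c1 + d1) = (k2 : ℤ) := by linear_combination e12
  have hsum1 : a2 + b2 = a1 + b1 := by
    have h : n * (a2 + b2) = n * (a1 + b1) := by linear_combination e21 - e11
    exact mul_left_cancel₀ (ne_of_gt hnpos) h
  have hsum2 : c2 + d2 = c1 + d1 := by
    have h : n * (c2 + d2) = n * (c1 + d1) := by linear_combination e22 - e12
    exact mul_left_cancel₀ (ne_of_gt hnpos) h
  have hspos : 0 < a1 + b1 := by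
    rcases lt_or_ge 0 (a1 + b1) with h | h
    · exact h
    · exfalso
      have hle : n * (a1 + b1) ≤ 0 := mul_nonpos_of_nonneg_of_nonpos (le_of_lt hnpos) h
      have hk : (0:ℤ) < k1 := by exact_mod_cast hk1
      rw [hns] at hle; linarith
  have htpos : 0 < c1 + d1 := by
    rcases lt_or_ge 0 (c1 + d1) with h | h
    · exact h
    · exfalso
      have hle : n * (c1 + d1) ≤ 0 := mul_nonpos_of_nonneg_of_nonpos (le_of_lt hnpos) h
      have hk : (0:ℤ) < k2 := by exact_mod_cast hk2
      rw [hnt] at hle; linarith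
  have hcop : IsCoprime (a1 + b1) (c1 + d1) := by
    rw [Int.isCoprime_iff_gcd_eq_one]
    have hg : Int.gcd (n * (a1 + b1)) (n * (c1 + d1)) =
        n.natAbs * Int.gcd (a1 + b1) (c1 + d1) := Int.gcd_mul_left n _ _
    rw [hns, hnt] at hg
    have hg2 : Int.gcd (k1 : ℤ) (k2 : ℤ) = Nat.gcd k1 k2 := Int.gcd_natCast_natCast k1 k2
    have hna : n.natAbs = Nat.gcd k1 k2 := by simp [hn]
    rw [hg2, hna] at hg
    have hgpos := Nat.gcd_pos_of_pos_left k2 hk1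
    have h1' : Nat.gcd k1 k2 * Int.gcd (a1 + b1) (c1 + d1) = Nat.gcd k1 k2 * 1 := by omega
    exact Nat.eq_of_mul_eq_mul_left hgpos h1'
  obtain ⟨hA, hB, hC, hD⟩ := sl2_aux_s1 a1 b1 c1 d1 a2 b2 c2 d2 ha1' hb1' hc1' hd1'
    ha2' hb2' hc2' hd2' det1 det2 hsum1 hsum2 hspos htpos hcop
  ext i j
  fin_cases i <;> fin_cases j
  · exact ha1.trans (hA.trans ha2.symm)
  · exact hb1.trans (hB.trans hb2.symm)
  · exact hc1.trans (hC.trans hc2.symm)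
  · exact hd1.trans (hD.trans hd2.symm)
end

section
/- Let k1 and k2 be positive integers and let n = gcd(k1, k2). Then there are exactly two matrices X in GL(2, ℤ) with all entries non-negative such that X applied to the column vector (n, n) equals the column vector (k1, k2): namely the unique such matrix X0 lying in SL(2, ℤ), and the matrix X0 · [[0, 1], [1, 0]]. -/
/-!
Write `(k1, k2) = g • (a, b)` with `g = gcd k1 k2`, so that `a, b > 0` are coprime. Then
`X (g, g) = (k1, k2)` says that the rows of `X` sum to `a` and `b`, so `X = [[p, a - p], [r, b - r]]`
and `det X = p b - r a`. For a non-negative `X` of determinant `1` this forces `0 < p ≤ a` and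
`p b ≡ 1 (mod a)`, which determines `p`, and then `r`. Multiplying on the right by the swap exchanges
the columns: it keeps the row sums and non-negativity and changes the sign of the determinant, so the
solutions of determinant `-1` are exactly `X0` times the swap.
-/

open Matrix

namespace Int

variable {a b : ℤ}

theorem exists_mul_sub_mul_eq_one (ha : 0 < a) (hb : 0 < b) (hab : IsCoprime a b) :
    ∃ p r : ℤ, 0 < p ∧ p ≤ a ∧ 0 ≤ r ∧ r ≤ b ∧ p * b - r * a = 1 := by
  obtain ⟨u, v, huv⟩ := hab
  -- the witness `p = v - a * q` is the representative of `v ≡ b⁻¹ (mod a)` in `(0, a]`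
  set q := (v - 1) / a
  have hv : (v - 1) % a + a * q = v - 1 := Int.emod_add_mul_ediv (v - 1) a
  have hlo := Int.emod_nonneg (v - 1) ha.ne'
  have hhi := Int.emod_lt_of_pos (v - 1) ha
  have hp : 0 < v - a * q := by linarith
  have hpa : v - a * q ≤ a := by linarith
  have hr : (v - a * q) * b - -(u + q * b) * a = 1 := by linear_combination huv
  refine ⟨v - a * q, -(u + q * b), hp, hpa, ?_, ?_, hr⟩ <;> nlinarith

theorem eq_of_mul_sub_mul_eq_one (hab : IsCoprime a b) {p r p' r' : ℤ}
    (hp : 0 < p) (hpa : p ≤ a) (hp' : 0 < p') (hp'a : p' ≤ a)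
    (h : p * b - r * a = 1) (h' : p' * b - r' * a = 1) : p = p' ∧ r = r' := by
  have hdvd : a ∣ p - p' :=
    hab.dvd_of_dvd_mul_right ⟨r - r', by linear_combination h - h'⟩
  obtain rfl : p = p' := by
    have := Int.eq_zero_of_abs_lt_dvd hdvd (abs_sub_lt_iff.2 ⟨by omega, by omega⟩)
    omega
  exact ⟨rfl, mul_right_cancel₀ (by omega : a ≠ 0) (by linear_combination h' - h)⟩

end Int

namespace Matrix

theorem mulVec_smul_eq_smul_iff {m n R : Type*} [Fintype n] [CommRing R] [IsDomain R]
    (X : Matrix m n R) (v : n → R) (w : m → R) {c : R} (hc : c ≠ 0) :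
    X *ᵥ (c • v) = c • w ↔ X *ᵥ v = w := by
  rw [mulVec_smul, (smul_right_injective _ hc).eq_iff]

theorem setOf_det_eq_one_or_neg_one_eq_pair {n R : Type*} [Fintype n] [DecidableEq n]
    [CommRing R] {P : Matrix n n R → Prop} {S X₀ : Matrix n n R}
    (hS : S * S = 1) (hdetS : S.det = -1) (hPS : ∀ X, P X → P (X * S))
    (hX₀ : ∀ X, X.det = 1 ∧ P X ↔ X = X₀) :
    {X | (X.det = 1 ∨ X.det = -1) ∧ P X} = {X₀, X₀ * S} := by
  have hPX₀ := ((hX₀ X₀).2 rfl).2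
  ext X
  simp only [Set.mem_ofPred_eq, Set.mem_insert_iff, Set.mem_singleton_iff]
  constructor
  · rintro ⟨hdet | hdet, hP⟩
    · exact Or.inl ((hX₀ X).1 ⟨hdet, hP⟩)
    · refine Or.inr ?_
      have hXS : X * S = X₀ := (hX₀ _).1 ⟨by rw [det_mul, hdet, hdetS]; ring, hPS X hP⟩
      rw [← hXS, mul_assoc, hS, mul_one]
  · rintro (rfl | rfl)
    · exact ⟨Or.inl ((hX₀ X).2 rfl).1, hPX₀⟩
    · exact ⟨Or.inr (by rw [det_mul, ((hX₀ X₀).2 rfl).1, hdetS, one_mul]), hPS _ hPX₀⟩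

variable {R : Type*} [CommRing R]

theorem mulVec_one_one_eq_iff (X : Matrix (Fin 2) (Fin 2) R) (a b : R) :
    X *ᵥ ![1, 1] = ![a, b] ↔ X 0 1 = a - X 0 0 ∧ X 1 1 = b - X 1 0 := by
  simp [funext_iff, Fin.forall_fin_two, eq_sub_iff_add_eq']

theorem det_fin_two_of_mulVec_one_one {X : Matrix (Fin 2) (Fin 2) R} {a b : R}
    (hX : X *ᵥ ![1, 1] = ![a, b]) : X.det = X 0 0 * b - X 1 0 * a := by
  obtain ⟨h0, h1⟩ := (mulVec_one_one_eq_iff X a b).1 hX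
  rw [det_fin_two, h0, h1]
  ring

theorem swap_mul_swap : (!![0, 1; 1, 0] : Matrix (Fin 2) (Fin 2) R) * !![0, 1; 1, 0] = 1 := by
  simp [one_fin_two]

theorem det_swap : (!![0, 1; 1, 0] : Matrix (Fin 2) (Fin 2) R).det = -1 := by
  simp [det_fin_two_of]

theorem mul_swap_apply (X : Matrix (Fin 2) (Fin 2) R) (i j : Fin 2) :
    (X * !![0, 1; 1, 0] : Matrix (Fin 2) (Fin 2) R) i j = X i (Equiv.swap 0 1 j) := by
  fin_cases j <;> simp [mul_apply]

theorem swap_mulVec_const (x : R) : !![0, 1; 1, 0] *ᵥ ![x, x] = ![x, x] := by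
  ext i
  fin_cases i <;> simp [mulVec, dotProduct]

theorem nonneg_mul_swap_mulVec_const [PartialOrder R] {X : Matrix (Fin 2) (Fin 2) R} {x : R}
    {w : Fin 2 → R} (h : (∀ i j, 0 ≤ X i j) ∧ X *ᵥ ![x, x] = w) :
    (∀ i j, 0 ≤ (X * !![0, 1; 1, 0] : Matrix (Fin 2) (Fin 2) R) i j) ∧
      (X * !![0, 1; 1, 0]) *ᵥ ![x, x] = w :=
  ⟨fun i j => mul_swap_apply X i j ▸ h.1 _ _, by rw [← mulVec_mulVec, swap_mulVec_const, h.2]⟩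

theorem existsUnique_det_eq_one_nonneg_mulVec_one_one {a b : ℤ} (ha : 0 < a) (hb : 0 < b)
    (hab : IsCoprime a b) :
    ∃! X : Matrix (Fin 2) (Fin 2) ℤ, X.det = 1 ∧ (∀ i j, 0 ≤ X i j) ∧ X *ᵥ ![1, 1] = ![a, b] := by
  obtain ⟨p, r, hp, hpa, hr, hrb, hdet⟩ := Int.exists_mul_sub_mul_eq_one ha hb hab
  refine ⟨!![p, a - p; r, b - r], ⟨?_, ?_, ?_⟩, ?_⟩
  · rw [det_fin_two_of]
    linear_combination hdet
  · intro i j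
    fin_cases i <;> fin_cases j <;> simp <;> omega
  · simp [funext_iff, Fin.forall_fin_two]
  · rintro Y ⟨hYdet, hY, hYv⟩
    rw [det_fin_two_of_mulVec_one_one hYv] at hYdet
    obtain ⟨hY01, hY11⟩ := (mulVec_one_one_eq_iff Y a b).1 hYv
    have hY00 : 0 < Y 0 0 := by nlinarith [hY 1 0]
    have hY00a : Y 0 0 ≤ a := by linarith [hY 0 1]
    obtain ⟨hp, hr⟩ := Int.eq_of_mul_sub_mul_eq_one hab hY00 hY00a hp hpa hYdet hdet
    rw [eta_fin_two Y, hY01, hY11, hp, hr]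

end Matrix

theorem existsUnique_det_eq_one_nonneg_mulVec_gcd (k1 k2 : ℕ) (hk1 : 0 < k1) (hk2 : 0 < k2) :
    ∃! X : Matrix (Fin 2) (Fin 2) ℤ, X.det = 1 ∧ (∀ i j, 0 ≤ X i j) ∧
      X *ᵥ ![(Nat.gcd k1 k2 : ℤ), (Nat.gcd k1 k2 : ℤ)] = ![(k1 : ℤ), (k2 : ℤ)] := by
  set g := Nat.gcd k1 k2
  obtain ⟨a, b, hab, ha, hb⟩ := Nat.exists_coprime k1 k2
  have hv : ![(g : ℤ), (g : ℤ)] = (g : ℤ) • ![1, 1] := by simp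
  have hw : ![(k1 : ℤ), (k2 : ℤ)] = (g : ℤ) • ![(a : ℤ), (b : ℤ)] := by
    have ha' : (k1 : ℤ) = g * a := by rw [mul_comm]; exact_mod_cast ha
    have hb' : (k2 : ℤ) = g * b := by rw [mul_comm]; exact_mod_cast hb
    rw [ha', hb']
    simp
  rw [hv, hw]
  simp_rw [mulVec_smul_eq_smul_iff _ _ _ (by positivity : (g : ℤ) ≠ 0)]
  exact existsUnique_det_eq_one_nonneg_mulVec_one_one
    (Int.natCast_pos.2 (Nat.pos_of_mul_pos_right (ha ▸ hk1)))
    (Int.natCast_pos.2 (Nat.pos_of_mul_pos_right (hb ▸ hk2)))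
    (Nat.isCoprime_iff_coprime.2 hab)

/-- For positive integers `k1, k2` with `n = gcd k1 k2`, the set of matrices
`X ∈ GL(2, ℤ)` (i.e. integer matrices with determinant `±1`) with non-negative entries
sending `(n, n)` to `(k1, k2)` consists of exactly two elements: the unique such matrix `X0`
lying in `SL(2, ℤ)`, and `X0 * [[0,1],[1,0]]`. -/
theorem gl2_nonneg_mulVec_gcd_eq_pair (k1 k2 : ℕ) (hk1 : 0 < k1) (hk2 : 0 < k2) :
    ∃! X0 : Matrix (Fin 2) (Fin 2) ℤ,
      X0.det = 1 ∧ (∀ i j, 0 ≤ X0 i j) ∧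
      X0.mulVec ![(Nat.gcd k1 k2 : ℤ), (Nat.gcd k1 k2 : ℤ)] = ![(k1 : ℤ), (k2 : ℤ)] ∧
      {X : Matrix (Fin 2) (Fin 2) ℤ |
          (X.det = 1 ∨ X.det = -1) ∧ (∀ i j, 0 ≤ X i j) ∧
          X.mulVec ![(Nat.gcd k1 k2 : ℤ), (Nat.gcd k1 k2 : ℤ)] = ![(k1 : ℤ), (k2 : ℤ)]}
        = {X0, X0 * !![0, 1; 1, 0]} := by
  obtain ⟨X₀, hX₀, huniq⟩ := existsUnique_det_eq_one_nonneg_mulVec_gcd k1 k2 hk1 hk2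
  refine ⟨X₀, ⟨hX₀.1, hX₀.2.1, hX₀.2.2, ?_⟩, fun Y hY => huniq Y ⟨hY.1, hY.2.1, hY.2.2.1⟩⟩
  exact setOf_det_eq_one_or_neg_one_eq_pair swap_mul_swap det_swap
    (fun _ => nonneg_mul_swap_mulVec_const) fun X => ⟨huniq X, fun h => h ▸ hX₀⟩
end

section
/- Let N ≥ 0 and let k0, k1, …, kN be positive integers with gcd(k0, …, kN) = n. Then there exists a matrix X in SL(N+1, ℤ) all of whose entries are non-negative such that X applied to the column vector (n, n, …, n) (with N+1 coordinates) equals the column vector (k0, k1, …, kN). -/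
/-!
Dividing by `n` reduces the theorem to the case of gcd `1`, where `X *ᵥ (n, …, n) = n • X *ᵥ 1`
and `X *ᵥ 1` is the vector of row sums. A positive vector `m` with gcd `1` is reached from
`(1, …, 1)` by moves `m ↦ m + m j • e i` with `i ≠ j`: if `m` is not constant, subtracting a
smaller entry `m j` from a larger one `m i` keeps the entries positive and the gcd equal to `1`
while lowering the sum, and a constant vector with gcd `1` is `(1, …, 1)`. Each move is left
multiplication by the non-negative transvection `1 + E i j ∈ SL`.
-/

open Matrix

theorem Finset.gcd_add_single_eq {ι : Type*} [DecidableEq ι] {s : Finset ι} {f : ι → ℕ}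
    {i j : ι} (hij : i ≠ j) (hj : j ∈ s) :
    s.gcd (f + Pi.single i (f j)) = s.gcd f := by
  refine eq_of_forall_dvd' fun d => ?_
  simp only [Finset.dvd_gcd_iff]
  refine ⟨fun h a ha => ?_, fun h a ha => dvd_add (h a ha) ?_⟩
  · have hdj : d ∣ f j := by simpa [hij.symm] using h j hj
    rcases eq_or_ne a i with rfl | hai
    · simpa [Nat.dvd_add_left hdj] using h a ha
    · simpa [hai] using h a ha
  · rw [Pi.single_apply]
    split_ifs
    exacts [h j hj, dvd_zero d]

theorem Matrix.mul_apply_nonneg {R l m n : Type*} [Semiring R] [PartialOrder R] [IsOrderedRing R]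
    [Fintype m] {A : Matrix l m R} {B : Matrix m n R} (hA : ∀ i j, 0 ≤ A i j)
    (hB : ∀ i j, 0 ≤ B i j) (i : l) (j : n) : 0 ≤ (A * B) i j :=
  Finset.sum_nonneg fun k _ => mul_nonneg (hA i k) (hB k j)

namespace Matrix

variable {n R : Type*} [DecidableEq n] [CommRing R]

theorem transvection_mulVec [Fintype n] (i j : n) (c : R) (v : n → R) :
    transvection i j c *ᵥ v = v + Pi.single i (c * v j) := by
  simp [transvection, add_mulVec, single_mulVec, Pi.single]

theorem transvection_nonneg [PartialOrder R] [IsOrderedRing R] (i j : n) {c : R}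
    (hc : 0 ≤ c) (a b : n) : 0 ≤ transvection i j c a b := by
  rw [transvection, add_apply]
  refine add_nonneg ?_ ?_
  · rw [one_apply]; split_ifs <;> simp
  · rw [single_apply]; split_ifs <;> simp [hc]

end Matrix

section

variable {ι : Type*} [Fintype ι] [DecidableEq ι]

theorem exists_sl_nonneg_mulVec_one_add_single {v : ι → ℤ} {X : SpecialLinearGroup ι ℤ}
    (hX : ∀ a b, 0 ≤ (X : Matrix ι ι ℤ) a b) (hXv : (X : Matrix ι ι ℤ) *ᵥ 1 = v)
    {i j : ι} (hij : i ≠ j) :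
    ∃ Y : SpecialLinearGroup ι ℤ,
      (∀ a b, 0 ≤ (Y : Matrix ι ι ℤ) a b) ∧ (Y : Matrix ι ι ℤ) *ᵥ 1 = v + Pi.single i (v j) := by
  refine ⟨SpecialLinearGroup.transvection hij 1 * X,
    mul_apply_nonneg (transvection_nonneg i j zero_le_one) hX, ?_⟩
  change (transvection i j 1 * (X : Matrix ι ι ℤ)) *ᵥ 1 = _
  rw [← mulVec_mulVec, hXv, transvection_mulVec, one_mul]

theorem exists_sl_nonneg_mulVec_one_eq (m : ι → ℕ) (hpos : ∀ a, 0 < m a)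
    (hgcd : Finset.univ.gcd m = 1) :
    ∃ X : SpecialLinearGroup ι ℤ,
      (∀ a b, 0 ≤ (X : Matrix ι ι ℤ) a b) ∧ (X : Matrix ι ι ℤ) *ᵥ 1 = fun a => (m a : ℤ) := by
  induction hs : ∑ a, m a using Nat.strong_induction_on generalizing m with
  | _ s ih =>
  by_cases hconst : ∀ a b, m a ≤ m b
  · have hone : m = 1 := funext fun a => Nat.dvd_one.mp <| hgcd ▸
      Finset.dvd_gcd fun b _ => (le_antisymm (hconst a b) (hconst b a)) ▸ dvd_rfl
    refine ⟨(1 : SpecialLinearGroup ι ℤ), fun a b => ?_, by ext a; simp [hone]⟩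
    change 0 ≤ (1 : Matrix ι ι ℤ) a b
    rw [one_apply]
    split_ifs <;> simp
  push Not at hconst
  obtain ⟨i, j, hlt⟩ := hconst
  have hij : i ≠ j := ne_of_apply_ne m hlt.ne'
  set m' := m - Pi.single i (m j)
  have hm : m = m' + Pi.single i (m' j) := by
    ext a
    rcases eq_or_ne a i with rfl | hai
    · simp [m', hij.symm]; omega
    · simp [m', hai]
  have hpos' : ∀ a, 0 < m' a := by
    intro a
    rcases eq_or_ne a i with rfl | hai
    · simp [m', hlt]
    · simpa [m', hai] using hpos a
  rw [hm, Finset.gcd_add_single_eq hij (Finset.mem_univ j)] at hgcd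
  have hsum : ∑ a, m' a < s := by
    simp [← hs, hm, Finset.sum_add_distrib, hpos' j]
  obtain ⟨X, hX, hXm⟩ := ih _ hsum m' hpos' hgcd rfl
  obtain ⟨Y, hY, hYm⟩ := exists_sl_nonneg_mulVec_one_add_single hX hXm hij
  refine ⟨Y, hY, hYm.trans ?_⟩
  rw [hm]
  ext a
  simp [Pi.single_apply, apply_ite (Nat.cast : ℕ → ℤ)]

end

/-- For positive integers `k 0, …, k N` with gcd `n`, there is a matrix
`X ∈ SL(N+1, ℤ)` with non-negative entries sending the constant vector `(n, …, n)` to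
`(k 0, …, k N)`. -/
theorem exists_sln_nonneg_mulVec_gcd (N : ℕ) (k : Fin (N + 1) → ℕ) (hk : ∀ i, 0 < k i)
    (n : ℕ) (hn : Finset.univ.gcd k = n) :
    ∃ X : Matrix.SpecialLinearGroup (Fin (N + 1)) ℤ,
      (∀ i j, 0 ≤ (X : Matrix (Fin (N + 1)) (Fin (N + 1)) ℤ) i j) ∧
      (X : Matrix (Fin (N + 1)) (Fin (N + 1)) ℤ).mulVec (fun _ => (n : ℤ))
        = fun i => (k i : ℤ) := by
  obtain ⟨m, hkm, hm⟩ := Finset.extract_gcd k Finset.univ_nonempty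
  simp only [Finset.mem_univ, hn, forall_const] at hkm
  have hmpos : ∀ i, 0 < m i := fun i => Nat.pos_of_mul_pos_left (hkm i ▸ hk i)
  obtain ⟨X, hX, hXm⟩ := exists_sl_nonneg_mulVec_one_eq m hmpos hm
  refine ⟨X, hX, ?_⟩
  rw [show (fun _ => (n : ℤ)) = (n : ℤ) • 1 by ext; simp, mulVec_smul, hXm]
  ext i
  simp [hkm i]
end
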